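/- Let G be a graph of order n with minimum degree at least k−1 ≥ 1. Then γ_{×kR}(G) = 2k if and only if G = K_k or G = H ∘_k K_k for some graph H (i.e., G is obtained from the disjoint union of some graph H and K_k by joining each vertex of H to at least k vertices of K_k, i.e., to all k vertices of K_k). -/

import Mathlib

/-!
A Roman `k`-tuple dominating function `f` of a nonempty graph, `k ≥ 2`, has at least `k` vertices
of value `2`: every vertex has at least `k - 1` neighbours of value `2`, and a vertex of value `2`
is not among its own. Hence its weight is at least `2k`. Weight exactly `2k` forces exactly `k`
vertices of value `2` and value `0` everywhere else; then the bounds `k - 1` (on a vertex of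
value `2`) and `k` (on a vertex of value `0`) are attained only if every vertex is adjacent to all
other value-`2` vertices. Conversely, value `2` on such a `k`-clique and `0` elsewhere has
weight `2k`.
-/

open Finset

/-- A Roman k-tuple dominating function: values in {0,1,2}; vertices with value 0
have at least k neighbors with value 2; vertices with nonzero value have at least
k-1 neighbors with value 2. -/
def IsRkTDF {V : Type*} (G : SimpleGraph V) (k : ℕ) (f : V → ℕ) : Prop :=
  (∀ v, f v ≤ 2) ∧
  (∀ v, f v = 0 → k ≤ {w | G.Adj v w ∧ f w = 2}.ncard) ∧
  (∀ v, f v ≠ 0 → k - 1 ≤ {w | G.Adj v w ∧ f w = 2}.ncard)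

/-- The Roman k-tuple domination number: minimum weight of a Roman k-tuple
dominating function. -/
noncomputable def romanKTDN {V : Type*} [Fintype V] (G : SimpleGraph V) (k : ℕ) : ℕ :=
  sInf {n | ∃ f : V → ℕ, IsRkTDF G k f ∧ ∑ v, f v = n}

/-- A k-tuple dominating set: every vertex has at least k members of S in its
closed neighborhood. -/
def IsKTupleDomSet {V : Type*} (G : SimpleGraph V) (k : ℕ) (S : Set V) : Prop :=
  ∀ v, k ≤ {w ∈ S | w = v ∨ G.Adj v w}.ncard

/-- The k-tuple domination number. -/
noncomputable def kTupleDomNum {V : Type*} (G : SimpleGraph V) (k : ℕ) : ℕ :=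
  sInf {n | ∃ S : Set V, IsKTupleDomSet G k S ∧ S.ncard = n}

section

variable {V : Type*} {G : SimpleGraph V} {k : ℕ} {f : V → ℕ}

lemma setOf_adj_two_subset (G : SimpleGraph V) (f : V → ℕ) (v : V) :
    {w | G.Adj v w ∧ f w = 2} ⊆ {w | f w = 2} \ {v} :=
  fun _ hw => ⟨hw.2, fun h => G.ne_of_adj hw.1 h.symm⟩

lemma IsRkTDF.sub_one_le_ncard_adj_two (hf : IsRkTDF G k f) (v : V) :
    k - 1 ≤ {w | G.Adj v w ∧ f w = 2}.ncard := by
  by_cases h : f v = 0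
  · exact (Nat.sub_le k 1).trans (hf.2.1 v h)
  · exact hf.2.2 v h

lemma IsRkTDF.le_ncard_two [Finite V] [Nonempty V] (hk : 2 ≤ k) (hf : IsRkTDF G k f) :
    k ≤ {v | f v = 2}.ncard := by
  have hle (v : V) : k - 1 ≤ ({w | f w = 2} \ {v}).ncard :=
    (hf.sub_one_le_ncard_adj_two v).trans (Set.ncard_le_ncard (setOf_adj_two_subset G f v))
  obtain ⟨u, hu⟩ : {w | f w = 2}.Nonempty := by
    refine Set.nonempty_of_ncard_ne_zero fun h => ?_
    have := (hle (Classical.arbitrary V)).trans (Set.ncard_sdiff_singleton_le _ _)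
    omega
  have hu_le := hle u
  rw [Set.ncard_sdiff_singleton_of_mem hu] at hu_le
  have hpos := (Set.ncard_pos).2 ⟨u, hu⟩
  omega

lemma IsRkTDF.adj_of_ncard_two_eq [Finite V] (hf : IsRkTDF G k f)
    (hcard : {v | f v = 2}.ncard = k) {u w : V} (hu : f u = 2) (hw : f w = 2) (huw : u ≠ w) :
    G.Adj u w := by
  have hsub := setOf_adj_two_subset G f u
  have hge := hf.2.2 u (by omega)
  have heq := Set.eq_of_subset_of_ncard_le hsub
    (by rw [Set.ncard_sdiff_singleton_of_mem (s := {w | f w = 2}) hu, hcard]; exact hge)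
  have hw' : w ∈ {w | f w = 2} \ {u} := ⟨hw, fun h => huw h.symm⟩
  exact (heq.ge hw').1

lemma IsRkTDF.adj_of_ncard_two_eq_of_eq_zero [Finite V] (hf : IsRkTDF G k f)
    (hcard : {v | f v = 2}.ncard = k) {v w : V} (hv : f v = 0) (hw : f w = 2) :
    G.Adj v w := by
  have hsub := (setOf_adj_two_subset G f v).trans Set.sdiff_subset
  have heq := Set.eq_of_subset_of_ncard_le hsub (hcard ▸ hf.2.1 v hv)
  exact (heq.ge (show w ∈ {w | f w = 2} from hw)).1

end

section

variable {V : Type*} [Fintype V] {G : SimpleGraph V} {k : ℕ} {f : V → ℕ}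

lemma sum_eq_two_mul_ncard_two_add (f : V → ℕ) :
    ∑ v, f v = 2 * {v | f v = 2}.ncard + ∑ v ∈ univ.filter (f · ≠ 2), f v := by
  rw [← sum_filter_add_sum_filter_not univ (f · = 2), sum_congr rfl fun v hv => (mem_filter.1 hv).2,
    sum_const, smul_eq_mul, mul_comm, Set.ncard_eq_toFinset_card', Set.toFinset_ofPred]

lemma IsRkTDF.two_mul_le_sum [Nonempty V] (hk : 2 ≤ k) (hf : IsRkTDF G k f) :
    2 * k ≤ ∑ v, f v := by
  rw [sum_eq_two_mul_ncard_two_add]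
  have := hf.le_ncard_two hk
  omega

lemma romanKTDN_le (hf : IsRkTDF G k f) : romanKTDN G k ≤ ∑ v, f v :=
  Nat.sInf_le ⟨f, hf, rfl⟩

lemma exists_isRkTDF_sum_eq_romanKTDN (h : 0 < romanKTDN G k) :
    ∃ f, IsRkTDF G k f ∧ ∑ v, f v = romanKTDN G k :=
  Nat.sInf_mem (Nat.nonempty_of_pos_sInf h)

lemma two_mul_le_romanKTDN [Nonempty V] (hk : 2 ≤ k) (hf : IsRkTDF G k f) :
    2 * k ≤ romanKTDN G k := by
  obtain ⟨g, hg, hsum⟩ : ∃ g, IsRkTDF G k g ∧ ∑ v, g v = romanKTDN G k :=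
    Nat.sInf_mem (s := {n | ∃ g : V → ℕ, IsRkTDF G k g ∧ ∑ v, g v = n}) ⟨_, f, hf, rfl⟩
  exact hsum ▸ hg.two_mul_le_sum hk

lemma IsRkTDF.exists_clique_of_sum_eq (hk : 2 ≤ k) (hf : IsRkTDF G k f)
    (hsum : ∑ v, f v = 2 * k) :
    ∃ S : Finset V, S.card = k ∧ G.IsClique (S : Set V) ∧ ∀ v ∉ S, ∀ w ∈ S, G.Adj v w := by
  classical
  have : Nonempty V := by
    by_contra h
    rw [not_nonempty_iff] at h
    rw [univ_eq_empty, sum_empty] at hsum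
    omega
  have hsplit := sum_eq_two_mul_ncard_two_add f
  have hcard : {v | f v = 2}.ncard = k := by
    have := hf.le_ncard_two hk
    omega
  have hzero (v : V) (hv : f v ≠ 2) : f v = 0 := by
    have := single_le_sum (fun _ _ => Nat.zero_le _) (mem_filter.2 ⟨mem_univ v, hv⟩)
      (f := f) (s := univ.filter (f · ≠ 2))
    omega
  refine ⟨univ.filter (f · = 2), ?_, ?_, ?_⟩
  · rwa [Set.ncard_eq_toFinset_card', Set.toFinset_ofPred] at hcard
  · intro u hu w hw huw
    simp only [coe_filter, mem_univ, true_and, Set.mem_ofPred_eq] at hu hw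
    exact hf.adj_of_ncard_two_eq hcard hu hw huw
  · intro v hv w hw
    simp only [mem_filter, mem_univ, true_and] at hv hw
    exact hf.adj_of_ncard_two_eq_of_eq_zero hcard (hzero v hv) hw

end

section

variable {V : Type*} {G : SimpleGraph V} {k : ℕ}

lemma isRkTDF_ite_mem [DecidableEq V] {S : Finset V} (hcard : S.card = k)
    (hclique : G.IsClique (S : Set V)) (hadj : ∀ v ∉ S, ∀ w ∈ S, G.Adj v w) :
    IsRkTDF G k (fun v => if v ∈ S then 2 else 0) := by
  have htwo (w : V) : (if w ∈ S then 2 else 0) = 2 ↔ w ∈ S := by split_ifs with h <;> simp [h]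
  refine ⟨fun v => by by_cases v ∈ S <;> simp [*], fun v hv => ?_, fun v hv => ?_⟩
  · have hvS : v ∉ S := by simpa using hv
    have hset : {w | G.Adj v w ∧ (if w ∈ S then 2 else 0) = 2} = (S : Set V) := by
      ext w
      simp only [Set.mem_ofPred_eq, mem_coe, htwo]
      exact ⟨And.right, fun hw => ⟨hadj v hvS w hw, hw⟩⟩
    rw [hset, Set.ncard_coe_finset, hcard]
  · have hvS : v ∈ S := by simpa using hv
    have hsub : ((S.erase v : Finset V) : Set V) ⊆
        {w | G.Adj v w ∧ (if w ∈ S then 2 else 0) = 2} := fun w hw => by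
      obtain ⟨hwv, hwS⟩ := mem_erase.1 hw
      exact ⟨hclique hvS hwS hwv.symm, (htwo w).2 hwS⟩
    have := Set.ncard_le_ncard hsub (S.finite_toSet.subset fun w hw => (htwo w).1 hw.2)
    rwa [Set.ncard_coe_finset, card_erase_of_mem hvS, hcard] at this

end

theorem stmt2_general {V : Type*} [Fintype V] (G : SimpleGraph V) (k : ℕ)
    (hk : 2 ≤ k) :
    romanKTDN G k = 2 * k ↔
      ∃ S : Finset V, S.card = k ∧ (G.IsClique (S : Set V)) ∧
        ∀ v ∉ S, ∀ w ∈ S, G.Adj v w := by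
  classical
  constructor
  · intro h
    obtain ⟨f, hf, hsum⟩ := exists_isRkTDF_sum_eq_romanKTDN (G := G) (k := k) (by omega)
    exact hf.exists_clique_of_sum_eq hk (hsum.trans h)
  · rintro ⟨S, hcard, hclique, hadj⟩
    have hf := isRkTDF_ite_mem hcard hclique hadj
    have : Nonempty V := (card_pos.1 (by omega : 0 < S.card)).to_type
    have hsum : ∑ v, (if v ∈ S then 2 else 0) = 2 * k := by
      rw [sum_ite_mem, univ_inter, sum_const, hcard, smul_eq_mul, mul_comm]
    exact le_antisymm (hsum ▸ romanKTDN_le hf) (two_mul_le_romanKTDN hk hf)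

theorem stmt2 {V : Type*} [Fintype V] (G : SimpleGraph V) (k : ℕ)
    (hk : 2 ≤ k)
    (hδ : ∀ v : V, k - 1 ≤ (G.neighborSet v).ncard) :
    romanKTDN G k = 2 * k ↔
      ∃ S : Finset V, S.card = k ∧ (G.IsClique (S : Set V)) ∧
        ∀ v ∉ S, ∀ w ∈ S, G.Adj v w :=
  stmt2_general G k hk
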